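/- Let ℓ ≥ 2 be an integer, E > 0 and L ∈ ℝ with 0 < |L| < (2ℓE/(ℓ+1))^{(ℓ+1)/(2ℓ)}. Then the equation L²/(2r²) + r^{2ℓ}/(2ℓ) = E has exactly two solutions r in (0, ∞). -/

import Mathlib

/-! The effective potential has derivative `(r ^ (2ℓ+2) - L²) / r³` on `(0, ∞)`, so it decreases
up to its unique critical point `c = |L| ^ (1/(ℓ+1))`, increases after it, and tends to `+∞` at
both ends of `(0, ∞)`. Its minimum value `(ℓ+1)/(2ℓ) · c ^ (2ℓ)` lies below `E` exactly when
`|L| < (2ℓE/(ℓ+1)) ^ ((ℓ+1)/(2ℓ))`, and then each monotone branch meets the level `E` exactly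
once. -/

open Real Set Filter Topology

noncomputable def effectivePotential (ℓ : ℕ) (L r : ℝ) : ℝ :=
  L ^ 2 / (2 * r ^ 2) + r ^ (2 * ℓ) / (2 * (ℓ : ℝ))

theorem exists_eq_pair_of_strictAntiOn_of_strictMonoOn {f : ℝ → ℝ} {c E : ℝ} (hc : 0 < c)
    (hf : ContinuousOn f (Ioi 0)) (hanti : StrictAntiOn f (Ioc 0 c))
    (hmono : StrictMonoOn f (Ici c)) (hfc : f c < E)
    (hf₀ : Tendsto f (𝓝[>] 0) atTop) (hf_top : Tendsto f atTop atTop) :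
    ∃ r₁ r₂ : ℝ, 0 < r₁ ∧ r₁ < r₂ ∧ {r : ℝ | 0 < r ∧ f r = E} = {r₁, r₂} := by
  obtain ⟨a, ⟨ha, hac⟩, hfa⟩ : ∃ a ∈ Ioo 0 c, E < f a :=
    (Filter.Eventually.and (Ioo_mem_nhdsGT hc) (hf₀.eventually_gt_atTop E)).exists
  obtain ⟨b, hcb, hfb⟩ : ∃ b, c < b ∧ E < f b :=
    ((eventually_gt_atTop c).and (hf_top.eventually_gt_atTop E)).exists
  obtain ⟨r₁, ⟨har₁, hr₁c⟩, hfr₁⟩ := intermediate_value_Ioo' hac.le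
    (hf.mono fun x hx => ha.trans_le hx.1) ⟨hfc, hfa⟩
  obtain ⟨r₂, ⟨hcr₂, -⟩, hfr₂⟩ := intermediate_value_Ioo hcb.le
    (hf.mono fun x hx => hc.trans_le hx.1) ⟨hfc, hfb⟩
  have hr₁ : 0 < r₁ := ha.trans har₁
  refine ⟨r₁, r₂, hr₁, hr₁c.trans hcr₂, Set.ext fun r => ⟨?_, ?_⟩⟩
  · rintro ⟨hr, hfr⟩
    rcases le_or_gt r c with hrc | hcr
    · exact Or.inl (hanti.injOn ⟨hr, hrc⟩ ⟨hr₁, hr₁c.le⟩ (hfr.trans hfr₁.symm))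
    · exact Or.inr (hmono.injOn hcr.le hcr₂.le (hfr.trans hfr₂.symm))
  · rintro (rfl | rfl)
    · exact ⟨hr₁, hfr₁⟩
    · exact ⟨hc.trans hcr₂, hfr₂⟩

theorem sq_eq_pow_of_pow_succ_eq_abs {ℓ : ℕ} {L c : ℝ} (hcL : c ^ (ℓ + 1) = |L|) :
    L ^ 2 = c ^ (2 * ℓ + 2) := by
  rw [← sq_abs, ← hcL, ← pow_mul]; ring_nf

namespace effectivePotential

variable {ℓ : ℕ} {L c : ℝ}

theorem hasDerivAt (hℓ : ℓ ≠ 0) {r : ℝ} (hr : r ≠ 0) :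
    HasDerivAt (effectivePotential ℓ L) ((r ^ (2 * ℓ + 2) - L ^ 2) / r ^ 3) r := by
  have h : HasDerivAt (fun r => L ^ 2 / (2 * r ^ 2) + r ^ (2 * ℓ) / (2 * (ℓ : ℝ))) _ r :=
    ((hasDerivAt_const r (L ^ 2)).div ((hasDerivAt_pow 2 r).const_mul 2)
      (by positivity)).add ((hasDerivAt_pow (2 * ℓ) r).div_const (2 * (ℓ : ℝ)))
  refine h.congr_deriv ?_
  have hℓ' : (ℓ : ℝ) ≠ 0 := Nat.cast_ne_zero.mpr hℓ
  have hpow : r ^ (2 * ℓ + 2) = r ^ (2 * ℓ - 1) * r ^ 3 := by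
    rw [← pow_add]; congr 1; omega
  rw [hpow]
  field_simp
  push_cast
  ring

theorem continuousOn_Ioi (hℓ : ℓ ≠ 0) : ContinuousOn (effectivePotential ℓ L) (Ioi 0) :=
  fun _ hr => (hasDerivAt hℓ (ne_of_gt hr)).continuousAt.continuousWithinAt

theorem strictAntiOn_Ioc (hℓ : ℓ ≠ 0) (hcL : c ^ (ℓ + 1) = |L|) :
    StrictAntiOn (effectivePotential ℓ L) (Ioc 0 c) := by
  refine strictAntiOn_of_deriv_neg (convex_Ioc 0 c)
    ((continuousOn_Ioi hℓ).mono Ioc_subset_Ioi_self) fun r hr => ?_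
  rw [interior_Ioc] at hr
  rw [(hasDerivAt hℓ hr.1.ne').deriv, sq_eq_pow_of_pow_succ_eq_abs hcL]
  have := pow_lt_pow_left₀ hr.2 hr.1.le (n := 2 * ℓ + 2) (by omega)
  exact div_neg_of_neg_of_pos (by linarith) (by positivity [hr.1])

theorem strictMonoOn_Ici (hℓ : ℓ ≠ 0) (hc : 0 < c) (hcL : c ^ (ℓ + 1) = |L|) :
    StrictMonoOn (effectivePotential ℓ L) (Ici c) := by
  refine strictMonoOn_of_deriv_pos (convex_Ici c)
    ((continuousOn_Ioi hℓ).mono fun r hr => hc.trans_le hr) fun r hr => ?_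
  rw [interior_Ici] at hr
  have hr0 : 0 < r := hc.trans hr
  rw [(hasDerivAt hℓ hr0.ne').deriv, sq_eq_pow_of_pow_succ_eq_abs hcL]
  have := pow_lt_pow_left₀ hr hc.le (n := 2 * ℓ + 2) (by omega)
  exact div_pos (by linarith) (by positivity)

theorem eq_of_pow_succ_eq_abs (hℓ : ℓ ≠ 0) (hc : 0 < c) (hcL : c ^ (ℓ + 1) = |L|) :
    effectivePotential ℓ L c = ((ℓ : ℝ) + 1) / (2 * ℓ) * c ^ (2 * ℓ) := by
  rw [effectivePotential, sq_eq_pow_of_pow_succ_eq_abs hcL]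
  field_simp
  ring

theorem tendsto_nhdsGT_zero (hL : L ≠ 0) : Tendsto (effectivePotential ℓ L) (𝓝[>] 0) atTop := by
  have h : Tendsto (fun r : ℝ => L ^ 2 / 2 * r⁻¹ ^ 2) (𝓝[>] 0) atTop :=
    ((tendsto_pow_atTop two_ne_zero).comp tendsto_inv_nhdsGT_zero).const_mul_atTop
      (by have := sq_pos_of_ne_zero hL; linarith)
  refine tendsto_atTop_mono (fun r => ?_) h
  have : L ^ 2 / 2 * r⁻¹ ^ 2 = L ^ 2 / (2 * r ^ 2) := by ring
  rw [this, effectivePotential]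
  have : 0 ≤ r ^ (2 * ℓ) / (2 * (ℓ : ℝ)) :=
    div_nonneg ((even_two_mul ℓ).pow_nonneg r) (by positivity)
  linarith

theorem tendsto_atTop (hℓ : ℓ ≠ 0) : Tendsto (effectivePotential ℓ L) atTop atTop := by
  refine tendsto_atTop_mono (fun r => ?_)
    ((tendsto_pow_atTop (by omega : 2 * ℓ ≠ 0)).atTop_div_const (r := 2 * (ℓ : ℝ))
      (by have : (0 : ℝ) < ℓ := Nat.cast_pos.mpr (Nat.pos_of_ne_zero hℓ); positivity))
  have : 0 ≤ L ^ 2 / (2 * r ^ 2) := by positivity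
  rw [effectivePotential]
  linarith

end effectivePotential

theorem pow_lt_of_rpow_lt {ℓ : ℕ} {A c : ℝ} (hℓ : ℓ ≠ 0) (hc : 0 ≤ c) (hA : 0 ≤ A)
    (h : c ^ (ℓ + 1) < A ^ (((ℓ : ℝ) + 1) / (2 * ℓ))) : c ^ (2 * ℓ) < A := by
  have hexp : (0 : ℝ) < ((ℓ : ℝ) + 1) / (2 * ℓ) := by positivity
  rw [← rpow_lt_rpow_iff (by positivity) hA hexp, ← rpow_natCast, ← rpow_mul hc]
  convert h using 1
  rw [← rpow_natCast]
  congr 1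
  push_cast
  field_simp

theorem stmt2 (ℓ : ℕ) (hℓ : 2 ≤ ℓ) (E L : ℝ) (hE : 0 < E)
    (hL : 0 < |L|)
    (hL' : |L| < (2 * (ℓ : ℝ) * E / ((ℓ : ℝ) + 1)) ^ (((ℓ : ℝ) + 1) / (2 * (ℓ : ℝ)))) :
    ∃ r₁ r₂ : ℝ, 0 < r₁ ∧ r₁ < r₂ ∧
      {r : ℝ | 0 < r ∧ L ^ 2 / (2 * r ^ 2) + r ^ (2 * ℓ) / (2 * (ℓ : ℝ)) = E}
        = {r₁, r₂} := by
  have hℓ₀ : ℓ ≠ 0 := by omega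
  set c := |L| ^ ((↑(ℓ + 1) : ℝ)⁻¹)
  have hc : 0 < c := rpow_pos_of_pos hL _
  have hcL : c ^ (ℓ + 1) = |L| := rpow_inv_natCast_pow (abs_nonneg L) (by omega)
  have hcrit : c ^ (2 * ℓ) < 2 * ℓ * E / ((ℓ : ℝ) + 1) :=
    pow_lt_of_rpow_lt hℓ₀ hc.le (by positivity) (hcL ▸ hL')
  have hVc : effectivePotential ℓ L c < E := by
    rw [lt_div_iff₀ (by positivity)] at hcrit
    rw [effectivePotential.eq_of_pow_succ_eq_abs hℓ₀ hc hcL, div_mul_eq_mul_div,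
      div_lt_iff₀ (by positivity)]
    linarith
  open effectivePotential in
  exact exists_eq_pair_of_strictAntiOn_of_strictMonoOn hc (continuousOn_Ioi hℓ₀)
    (strictAntiOn_Ioc hℓ₀ hcL) (strictMonoOn_Ici hℓ₀ hc hcL) hVc
    (tendsto_nhdsGT_zero (abs_pos.mp hL)) (tendsto_atTop hℓ₀)
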